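/- arXiv:2508.20036 — 4 statements merged into one kernel-verified Lean document; each statement's English description precedes it below -/
import Mathlib

section
/- If A and B are symmetric n×n real matrices and z is a complex number with positive imaginary part, then |(1/n)Tr((A - zI)^{-1}) - (1/n)Tr((B - zI)^{-1})| ≤ (π / (n · Im z)) · rank(A - B). -/
/-!
For a Hermitian `H` and `Im z ≠ 0`, `Im ⟪w, (H - z) w⟫ = -Im z ‖w‖²`, so `‖(H - z) w‖ ≥ |Im z| ‖w‖`
and the resolvent `(H - z)⁻¹` has operator norm at most `1 / |Im z|`. The resolvent identity
`(K - z)⁻¹ - (H - z)⁻¹ = (K - z)⁻¹ (H - K) (H - z)⁻¹` shows that the difference of two resolvents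
has rank at most `rank (H - K)` and norm at most `2 / |Im z|`. Computing the trace in an orthonormal
basis of its range bounds it by `2 rank (H - K) / |Im z|`. Finally, the rank of a real matrix is
unchanged over `ℂ`, and `2 ≤ π`.
-/

open Matrix Complex

open scoped InnerProductSpace

namespace LinearMap

theorem IsSymmetric.abs_im_mul_norm_le_norm_sub_smul {E : Type*} [NormedAddCommGroup E]
    [InnerProductSpace ℂ E] {T : E →ₗ[ℂ] E} (hT : T.IsSymmetric) (z : ℂ) (w : E) :
    |z.im| * ‖w‖ ≤ ‖T w - z • w‖ := by
  have him : (⟪w, T w - z • w⟫_ℂ).im = -(z.im * ‖w‖ ^ 2) := by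
    have h0 : (⟪w, T w⟫_ℂ).im = 0 := hT.im_inner_self_apply w
    rw [inner_sub_right, inner_smul_right, inner_self_eq_norm_sq_to_K, sub_im, h0]
    simp [mul_im, ← ofReal_pow]
  have hsq : |z.im| * ‖w‖ ^ 2 ≤ ‖w‖ * ‖T w - z • w‖ :=
    calc |z.im| * ‖w‖ ^ 2 = |(⟪w, T w - z • w⟫_ℂ).im| := by
          rw [him, abs_neg, abs_mul, abs_of_nonneg (sq_nonneg ‖w‖)]
      _ ≤ ‖⟪w, T w - z • w⟫_ℂ‖ := abs_im_le_norm _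
      _ ≤ ‖w‖ * ‖T w - z • w‖ := norm_inner_le_norm _ _
  rcases (norm_nonneg w).eq_or_lt with hw | hw
  · rw [← hw, mul_zero]; positivity
  · rw [sq, ← mul_assoc, mul_comm _ ‖w‖] at hsq
    exact le_of_mul_le_mul_left hsq hw

theorem norm_trace_le_finrank_range_mul {𝕜 E : Type*} [RCLike 𝕜] [NormedAddCommGroup E]
    [InnerProductSpace 𝕜 E] [FiniteDimensional 𝕜 E] (f : E →ₗ[𝕜] E) {c : ℝ}
    (hf : ∀ v, ‖f v‖ ≤ c * ‖v‖) :
    ‖trace 𝕜 E f‖ ≤ Module.finrank 𝕜 (range f) * c := by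
  have hmaps : ∀ v ∈ range f, f v ∈ range f := fun v _ => mem_range_self f v
  let b := stdOrthonormalBasis 𝕜 (range f)
  have hterm : ∀ i, ‖⟪b i, f.restrict hmaps (b i)⟫_𝕜‖ ≤ c := fun i =>
    calc ‖⟪b i, f.restrict hmaps (b i)⟫_𝕜‖ ≤ ‖b i‖ * ‖f (b i)‖ := norm_inner_le_norm _ _
      _ ≤ ‖b i‖ * (c * ‖b i‖) := by gcongr; exact hf _
      _ = c := by rw [b.orthonormal.1 i]; ring
  rw [← trace_restrict_eq_of_forall_mem _ f (fun v => mem_range_self f v) hmaps,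
    trace_eq_sum_inner _ b]
  calc ‖∑ i, ⟪b i, f.restrict hmaps (b i)⟫_𝕜‖ ≤ ∑ i, ‖⟪b i, f.restrict hmaps (b i)⟫_𝕜‖ :=
        norm_sum_le _ _
    _ ≤ ∑ _i, c := Finset.sum_le_sum fun i _ => hterm i
    _ = _ := by simp only [Finset.sum_const, Finset.card_univ, Fintype.card_fin, nsmul_eq_mul]

end LinearMap

namespace Matrix

theorem IsSymm.isHermitian_map_ofReal {m : Type*} {M : Matrix m m ℝ} (hM : M.IsSymm) :
    (M.map ofReal).IsHermitian :=
  (isHermitian_iff_isSymm.mpr hM).map _ fun r => (conj_ofReal r).symm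

variable {m : Type*} [Fintype m] [DecidableEq m]

theorem rank_fromBlocks_one_zero {K : Type*} [Field K] (r s : Type*) [Fintype r] [Fintype s]
    [DecidableEq r] :
    (fromBlocks 1 0 0 0 : Matrix (r ⊕ s) (r ⊕ s) K).rank = Fintype.card r := by
  classical
  rw [← diagonal_one, ← diagonal_zero, fromBlocks_diagonal, rank_diagonal, Fintype.card_subtype,
    Finset.card_filter, Fintype.sum_sum_type]
  simp

theorem rank_map_ringHom {K L : Type*} [Field K] [Field L] (f : K →+* L) (M : Matrix m m K) :
    (M.map f).rank = M.rank := by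
  obtain ⟨V, U, e, hV, hU, hVMU⟩ := exists_rank_normal_form M
  have hVMU' : V.map f * M.map f * U.map f = (fromBlocks 1 0 0 0).submatrix e e := by
    simpa [Matrix.map_mul, ← submatrix_map, fromBlocks_map] using congrArg (·.map f) hVMU
  have hVf : IsUnit (V.map f).det := (isUnit_iff_isUnit_det _).mp (hV.map f.mapMatrix)
  have hUf : IsUnit (U.map f).det := (isUnit_iff_isUnit_det _).mp (hU.map f.mapMatrix)
  rw [← rank_mul_eq_right_of_isUnit_det _ _ hVf, ← rank_mul_eq_left_of_isUnit_det _ _ hUf, hVMU',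
    rank_submatrix, rank_fromBlocks_one_zero, Fintype.card_fin]

variable {ι : Type*} [Fintype ι] [DecidableEq ι]

theorem norm_trace_le_rank_mul {𝕜 : Type*} [RCLike 𝕜] (M : Matrix ι ι 𝕜) {c : ℝ}
    (hM : ∀ v, ‖toEuclideanLin M v‖ ≤ c * ‖v‖) : ‖M.trace‖ ≤ M.rank * c := by
  have htrace : M.trace = LinearMap.trace 𝕜 _ (toEuclideanLin M) := by
    rw [toEuclideanLin_eq_toLin_orthonormal,
      LinearMap.trace_eq_matrix_trace 𝕜 (EuclideanSpace.basisFun ι 𝕜).toBasis,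
      LinearMap.toMatrix_toLin]
  have hrank : M.rank = Module.finrank 𝕜 (LinearMap.range (toEuclideanLin M)) := by
    rw [toEuclideanLin_eq_toLin_orthonormal]
    exact rank_eq_finrank_range_toLin _ _ _
  rw [htrace, hrank]
  exact LinearMap.norm_trace_le_finrank_range_mul _ hM

theorem IsHermitian.abs_im_mul_norm_le {H : Matrix ι ι ℂ} (hH : H.IsHermitian) (z : ℂ)
    (w : EuclideanSpace ℂ ι) : |z.im| * ‖w‖ ≤ ‖toEuclideanLin (H - z • 1) w‖ := by
  have hsub : toEuclideanLin (H - z • 1) w = toEuclideanLin H w - z • w := by simp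
  rw [hsub]
  exact (isSymmetric_toEuclideanLin_iff.mpr hH).abs_im_mul_norm_le_norm_sub_smul z w

theorem IsHermitian.isUnit_sub_smul_one {H : Matrix ι ι ℂ} (hH : H.IsHermitian) {z : ℂ}
    (hz : z.im ≠ 0) : IsUnit (H - z • 1) := by
  have hinj : Function.Injective (toEuclideanLin (H - z • 1)) := by
    rw [← LinearMap.ker_eq_bot, LinearMap.ker_eq_bot']
    intro w hw
    have hle := hH.abs_im_mul_norm_le z w
    rw [hw, norm_zero, ← mul_zero |z.im|] at hle
    exact norm_le_zero_iff.mp (le_of_mul_le_mul_left hle (abs_pos.mpr hz))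
  refine mulVec_injective_iff_isUnit.mp fun v₁ v₂ hv => ?_
  simpa using hinj (a₁ := WithLp.toLp 2 v₁) (a₂ := WithLp.toLp 2 v₂)
    (by simp only [toLpLin_apply, hv])

theorem IsHermitian.norm_inv_sub_smul_one_apply_le {H : Matrix ι ι ℂ} (hH : H.IsHermitian) {z : ℂ}
    (hz : z.im ≠ 0) (v : EuclideanSpace ℂ ι) :
    ‖toEuclideanLin (H - z • 1)⁻¹ v‖ ≤ ‖v‖ / |z.im| := by
  have hw : toEuclideanLin (H - z • 1) (toEuclideanLin (H - z • 1)⁻¹ v) = v := by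
    have hdet := (isUnit_iff_isUnit_det _).mp (hH.isUnit_sub_smul_one hz)
    rw [← LinearMap.comp_apply, ← toLpLin_mul_same, mul_nonsing_inv _ hdet, toLpLin_one,
      LinearMap.id_apply]
  have hle := hH.abs_im_mul_norm_le z (toEuclideanLin (H - z • 1)⁻¹ v)
  rwa [hw, ← le_div_iff₀' (abs_pos.mpr hz)] at hle

theorem IsHermitian.norm_trace_inv_sub_smul_one_sub_le {H K : Matrix ι ι ℂ} (hH : H.IsHermitian)
    (hK : K.IsHermitian) {z : ℂ} (hz : z.im ≠ 0) :
    ‖(H - z • 1)⁻¹.trace - (K - z • 1)⁻¹.trace‖ ≤ (H - K).rank * (2 / |z.im|) := by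
  have hunits : IsUnit (K - z • 1) ↔ IsUnit (H - z • 1) :=
    iff_of_true (hK.isUnit_sub_smul_one hz) (hH.isUnit_sub_smul_one hz)
  have hrank : ((K - z • 1)⁻¹ - (H - z • 1)⁻¹).rank ≤ (H - K).rank := by
    rw [inv_sub_inv hunits, sub_sub_sub_cancel_right]
    exact (rank_mul_le_left _ _).trans (rank_mul_le_right _ _)
  have hnorm : ∀ v, ‖toEuclideanLin ((K - z • 1)⁻¹ - (H - z • 1)⁻¹) v‖ ≤ 2 / |z.im| * ‖v‖ := by
    intro v
    calc _ ≤ ‖toEuclideanLin (K - z • 1)⁻¹ v‖ + ‖toEuclideanLin (H - z • 1)⁻¹ v‖ := by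
          rw [map_sub, LinearMap.sub_apply]; exact norm_sub_le _ _
      _ ≤ ‖v‖ / |z.im| + ‖v‖ / |z.im| :=
          add_le_add (hK.norm_inv_sub_smul_one_apply_le hz v) (hH.norm_inv_sub_smul_one_apply_le hz v)
      _ = 2 / |z.im| * ‖v‖ := by ring
  rw [norm_sub_rev, ← trace_sub]
  calc _ ≤ _ := norm_trace_le_rank_mul _ hnorm
    _ ≤ _ := by gcongr

end Matrix

theorem stieltjes_rank_bound_general (n : ℕ)
    (A B : Matrix (Fin n) (Fin n) ℝ) (hA : A.IsSymm) (hB : B.IsSymm)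
    (z : ℂ) (hz : 0 < z.im) :
    ‖(1 / (n : ℂ)) * Matrix.trace ((A.map (Complex.ofReal) - z • (1 : Matrix (Fin n) (Fin n) ℂ))⁻¹)
      - (1 / (n : ℂ)) * Matrix.trace ((B.map (Complex.ofReal) - z • (1 : Matrix (Fin n) (Fin n) ℂ))⁻¹)‖
    ≤ (Real.pi / (n * z.im)) * ((A - B).rank : ℝ) := by
  have hbound :=
    hA.isHermitian_map_ofReal.norm_trace_inv_sub_smul_one_sub_le hB.isHermitian_map_ofReal hz.ne'
  rw [← Matrix.map_sub _ ofReal_sub, abs_of_pos hz,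
    show ((A - B).map ofReal).rank = (A - B).rank from rank_map_ringHom ofRealHom _] at hbound
  rw [← mul_sub, norm_mul]
  calc _ ≤ ‖1 / (n : ℂ)‖ * ((A - B).rank * (2 / z.im)) := by gcongr
    _ = 2 / (n * z.im) * (A - B).rank := by rw [norm_div, norm_one, norm_natCast]; ring
    _ ≤ Real.pi / (n * z.im) * (A - B).rank := by gcongr; exact Real.two_le_pi

/-- If `A` and `B` are symmetric `n × n` real matrices and `z ∈ ℂ` with `Im z > 0`, then
`|(1/n) Tr((A - zI)⁻¹) - (1/n) Tr((B - zI)⁻¹)| ≤ (π / (n · Im z)) · rank (A - B)`. -/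
theorem stieltjes_rank_bound (n : ℕ) (hn : 0 < n)
    (A B : Matrix (Fin n) (Fin n) ℝ) (hA : A.IsSymm) (hB : B.IsSymm)
    (z : ℂ) (hz : 0 < z.im) :
    ‖(1 / (n : ℂ)) * Matrix.trace ((A.map (Complex.ofReal) - z • (1 : Matrix (Fin n) (Fin n) ℂ))⁻¹)
      - (1 / (n : ℂ)) * Matrix.trace ((B.map (Complex.ofReal) - z • (1 : Matrix (Fin n) (Fin n) ℂ))⁻¹)‖
    ≤ (Real.pi / (n * z.im)) * ((A - B).rank : ℝ) :=
  stieltjes_rank_bound_general n A B hA hB z hz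
end

section
/- Let W be a d×p real matrix with singular value decomposition W = UΣV^T, with singular values σ_1, …, σ_m (m = min(d,p)), left singular vectors u^1, …, u^m ∈ ℝ^d and right singular vectors v^1, …, v^m ∈ ℝ^p. Define the linear operator Q̂ on ℝ^d ⊗ ℝ^p by Q̂(x ⊗ y) = (α²/d)(x ⊗ W^T W y + W y ⊗ W^T x) + β²(x ⊗ y), extended linearly. Then for i ≠ j ≤ m with σ_i² + σ_j² > 0, the vector σ_j u^i ⊗ v^j + σ_i u^j ⊗ v^i is an eigenvector of Q̂ with eigenvalue (α²/d)(σ_i² + σ_j²) + β², and the vector σ_i u^i ⊗ v^j − σ_j u^j ⊗ v^i is an eigenvector with eigenvalue β². -/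
/-! The singular-vector relations make `Q̂` send `uⁱ ⊗ vʲ` into the span of `uⁱ ⊗ vʲ` and
`uʲ ⊗ vⁱ`, so on this plane `Q̂` acts by the matrix `(α²/d) [[σⱼ², σᵢσⱼ], [σᵢσⱼ, σᵢ²]] + β²`,
whose eigenvectors are `(σⱼ, σᵢ)` and `(σᵢ, -σⱼ)`. -/

open Matrix

/-- The operator `Q̂` on `ℝ^d ⊗ ℝ^p ≅ Matrix (Fin d) (Fin p) ℝ` defined on simple tensors by
`Q̂(x ⊗ y) = (α²/d)(x ⊗ WᵀW y + W y ⊗ Wᵀ x) + β² (x ⊗ y)`, extended linearly.  On a matrix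
`T` (identifying `x ⊗ y` with `vecMulVec x y`) it is given by
`Q̂(T) = (α²/d) (T (WᵀW) + W Tᵀ W) + β² T`. -/
noncomputable def Qhat (d p : ℕ) (α β : ℝ) (W : Matrix (Fin d) (Fin p) ℝ)
    (T : Matrix (Fin d) (Fin p) ℝ) : Matrix (Fin d) (Fin p) ℝ :=
  (α ^ 2 / d) • (T * (Wᵀ * W) + W * Tᵀ * W) + β ^ 2 • T

namespace Matrix

variable {l m n : Type*} [Fintype m] [Fintype n] {R : Type*} [CommRing R] (W : Matrix m n R)

theorem vecMulVec_mul_transpose_mul_self {σ : R} {u : m → R} {v : n → R}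
    (hW : W *ᵥ v = σ • u) (hWT : Wᵀ *ᵥ u = σ • v) (x : l → R) :
    vecMulVec x v * (Wᵀ * W) = σ ^ 2 • vecMulVec x v := by
  rw [vecMulVec_mul, ← mulVec_transpose, transpose_mul, transpose_transpose, ← mulVec_mulVec,
    hW, mulVec_smul, hWT, smul_smul, ← sq, vecMulVec_smul]

theorem mul_transpose_vecMulVec_mul {σ τ : R} {u u' : m → R} {v v' : n → R}
    (hW : W *ᵥ v = σ • u') (hWT : Wᵀ *ᵥ u = τ • v') :
    W * (vecMulVec u v)ᵀ * W = (σ * τ) • vecMulVec u' v' := by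
  rw [transpose_vecMulVec, mul_vecMulVec, hW, vecMulVec_mul, ← mulVec_transpose, hWT,
    smul_vecMulVec, vecMulVec_smul, smul_smul]

end Matrix

section Qhat

variable {d p : ℕ} {α β : ℝ} {W : Matrix (Fin d) (Fin p) ℝ}

theorem Qhat_add (S T : Matrix (Fin d) (Fin p) ℝ) :
    Qhat d p α β W (S + T) = Qhat d p α β W S + Qhat d p α β W T := by
  simp only [Qhat, transpose_add, Matrix.add_mul, Matrix.mul_add]
  module

theorem Qhat_sub (S T : Matrix (Fin d) (Fin p) ℝ) :
    Qhat d p α β W (S - T) = Qhat d p α β W S - Qhat d p α β W T := by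
  simp only [Qhat, transpose_sub, Matrix.sub_mul, Matrix.mul_sub]
  module

theorem Qhat_smul (c : ℝ) (T : Matrix (Fin d) (Fin p) ℝ) :
    Qhat d p α β W (c • T) = c • Qhat d p α β W T := by
  simp only [Qhat, transpose_smul, Matrix.smul_mul, Matrix.mul_smul]
  module

theorem Qhat_vecMulVec {σi σj : ℝ} {ui uj : Fin d → ℝ} {vi vj : Fin p → ℝ}
    (hWTi : Wᵀ *ᵥ ui = σi • vi) (hWj : W *ᵥ vj = σj • uj) (hWTj : Wᵀ *ᵥ uj = σj • vj) :
    Qhat d p α β W (vecMulVec ui vj)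
      = (α ^ 2 / d * σj ^ 2 + β ^ 2) • vecMulVec ui vj
        + (α ^ 2 / d * (σj * σi)) • vecMulVec uj vi := by
  rw [Qhat, vecMulVec_mul_transpose_mul_self W hWj hWTj,
    mul_transpose_vecMulVec_mul W hWj hWTi]
  module

end Qhat

theorem Qhat_eigenvectors_general (d p : ℕ) (α β : ℝ)
    (W : Matrix (Fin d) (Fin p) ℝ)
    (σi σj : ℝ) (ui uj : Fin d → ℝ) (vi vj : Fin p → ℝ)
    (hWi : W *ᵥ vi = σi • ui) (hWTi : Wᵀ *ᵥ ui = σi • vi)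
    (hWj : W *ᵥ vj = σj • uj) (hWTj : Wᵀ *ᵥ uj = σj • vj) :
    Qhat d p α β W (σj • vecMulVec ui vj + σi • vecMulVec uj vi)
      = ((α ^ 2 / d) * (σi ^ 2 + σj ^ 2) + β ^ 2) •
          (σj • vecMulVec ui vj + σi • vecMulVec uj vi)
    ∧ Qhat d p α β W (σi • vecMulVec ui vj - σj • vecMulVec uj vi)
      = β ^ 2 • (σi • vecMulVec ui vj - σj • vecMulVec uj vi) := by
  have hij := Qhat_vecMulVec (α := α) (β := β) hWTi hWj hWTj
  have hji := Qhat_vecMulVec (α := α) (β := β) hWTj hWi hWTi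
  constructor
  · rw [Qhat_add, Qhat_smul, Qhat_smul, hij, hji]
    module
  · rw [Qhat_sub, Qhat_smul, Qhat_smul, hij, hji]
    module

/-- For singular triples `(σᵢ, uⁱ, vⁱ)`, `(σⱼ, uʲ, vʲ)` of `W` with `i ≠ j` and
`σᵢ² + σⱼ² > 0`, the vector `σⱼ uⁱ ⊗ vʲ + σᵢ uʲ ⊗ vⁱ` is an eigenvector of `Q̂` with
eigenvalue `(α²/d)(σᵢ² + σⱼ²) + β²`, and `σᵢ uⁱ ⊗ vʲ − σⱼ uʲ ⊗ vⁱ` is an eigenvector with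
eigenvalue `β²`. -/
theorem Qhat_eigenvectors (d p : ℕ) (hd : 0 < d) (α β : ℝ)
    (W : Matrix (Fin d) (Fin p) ℝ)
    (σi σj : ℝ) (ui uj : Fin d → ℝ) (vi vj : Fin p → ℝ)
    (hWi : W *ᵥ vi = σi • ui) (hWTi : Wᵀ *ᵥ ui = σi • vi)
    (hWj : W *ᵥ vj = σj • uj) (hWTj : Wᵀ *ᵥ uj = σj • vj)
    (hσ : 0 < σi ^ 2 + σj ^ 2) :
    Qhat d p α β W (σj • vecMulVec ui vj + σi • vecMulVec uj vi)
      = ((α ^ 2 / d) * (σi ^ 2 + σj ^ 2) + β ^ 2) •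
          (σj • vecMulVec ui vj + σi • vecMulVec uj vi)
    ∧ Qhat d p α β W (σi • vecMulVec ui vj - σj • vecMulVec uj vi)
      = β ^ 2 • (σi • vecMulVec ui vj - σj • vecMulVec uj vi) :=
  Qhat_eigenvectors_general d p α β W σi σj ui uj vi vj hWi hWTi hWj hWTj
end

section
/- Let h : ℝ → ℝ be given by h(x) = E[h₁(xZ)h₂(xZ)] where Z is a standard Gaussian and h₁, h₂ are locally Lipschitz with polynomial growth. If g is defined by g(x²) = h(x), then for x ≠ 0, g'(x²) = (1/(2x²))·E[(Z²−1)·h₁(xZ)·h₂(xZ)]. -/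
/-!
With `F = h₁ h₂` and `y = x²`, the substitution `u = x z` gives `g y = ∫ F(u) φ_y(u) du`,
where `φ_y` is the centred Gaussian density of variance `y`. Differentiating in the variance,
`∂_y φ_y(u) = φ_y(u) (u²/y - 1)/(2y)`; for `y` near `y₀` this derivative times `F` is dominated
by a polynomial in `|u|` times `exp(-u²/(3 y₀))`, so we may differentiate under the integral
sign, and undoing the substitution gives the formula.
-/

open MeasureTheory ProbabilityTheory Real Polynomial Filter

lemma integrable_abs_pow_mul_exp_neg_mul_sq {b : ℝ} (hb : 0 < b) (k : ℕ) :
    Integrable fun u : ℝ => |u| ^ k * exp (-b * u ^ 2) := by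
  have h := (integrable_rpow_mul_exp_neg_mul_sq hb (neg_one_lt_zero.trans_le k.cast_nonneg)).norm
  simpa [rpow_natCast, abs_mul, abs_pow] using h

lemma integrable_eval_abs_mul_exp_neg_mul_sq {b : ℝ} (hb : 0 < b) (P : ℝ[X]) :
    Integrable fun u : ℝ => P.eval |u| * exp (-b * u ^ 2) := by
  induction P using Polynomial.induction_on' with
  | add P Q hP hQ =>
    simp only [eval_add, add_mul]
    exact hP.add hQ
  | monomial k a =>
    simpa only [eval_monomial, mul_assoc] using
      (integrable_abs_pow_mul_exp_neg_mul_sq hb k).const_mul a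

lemma gaussianPDFReal_zero_toNNReal {t : ℝ} (ht : 0 ≤ t) (u : ℝ) :
    gaussianPDFReal 0 t.toNNReal u = (√(2 * π * t))⁻¹ * exp (-u ^ 2 / (2 * t)) := by
  simp [gaussianPDFReal, ht]

lemma hasDerivAt_gaussianPDFReal_toNNReal {y : ℝ} (hy : 0 < y) (u : ℝ) :
    HasDerivAt (fun t : ℝ => gaussianPDFReal 0 t.toNNReal u)
      (gaussianPDFReal 0 y.toNNReal u * ((u ^ 2 / y - 1) / (2 * y))) y := by
  have hs : √(2 * π * y) ≠ 0 := by positivity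
  have hsqrt : HasDerivAt (fun t => √(2 * π * t)) (2 * π / (2 * √(2 * π * y))) y := by
    simpa [div_mul_eq_mul_div] using ((hasDerivAt_id y).const_mul (2 * π)).sqrt (by positivity)
  have hexp : HasDerivAt (fun t => exp (-u ^ 2 / (2 * t)))
      (exp (-u ^ 2 / (2 * y)) * (u ^ 2 / (2 * y ^ 2))) y := by
    have := (((hasDerivAt_id y).const_mul 2).inv (by positivity)).const_mul (-u ^ 2) |>.exp
    convert this using 1
    · ext t; simp [div_eq_mul_inv]
    · simp only [id, Pi.inv_apply]
      field_simp
  rw [gaussianPDFReal_zero_toNNReal hy.le]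
  refine ((hsqrt.inv hs).mul hexp |>.congr_of_eventuallyEq ?_).congr_deriv ?_
  · filter_upwards [lt_mem_nhds hy] with t ht
    simp [gaussianPDFReal_zero_toNNReal ht.le]
  · rw [Pi.inv_apply, sq_sqrt (by positivity)]
    field_simp
    ring

lemma gaussianPDFReal_toNNReal_le {y t : ℝ} (hyt : y < 2 * t) (hty : 2 * t ≤ 3 * y) (u : ℝ) :
    gaussianPDFReal 0 t.toNNReal u ≤ (√(π * y))⁻¹ * exp (-(3 * y)⁻¹ * u ^ 2) := by
  have hy : 0 < y := by linarith
  have ht : 0 < t := by linarith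
  rw [gaussianPDFReal_zero_toNNReal ht.le]
  gcongr ?_ * exp ?_
  · exact inv_anti₀ (by positivity) (sqrt_le_sqrt (by nlinarith [pi_pos]))
  · rw [neg_div, neg_mul, neg_le_neg_iff, div_eq_inv_mul]
    gcongr

lemma abs_sq_div_sub_one_div_le {y t : ℝ} (hy : 0 < y) (hyt : y < 2 * t) (u : ℝ) :
    |(u ^ 2 / t - 1) / (2 * t)| ≤ (2 / y * u ^ 2 + 1) / y := by
  have ht : 0 < t := by linarith
  calc |(u ^ 2 / t - 1) / (2 * t)| ≤ (u ^ 2 / t + 1) / (2 * t) := by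
        rw [abs_div, abs_of_pos (by positivity : 0 < 2 * t)]
        gcongr
        exact (abs_sub _ _).trans (by simp [abs_of_nonneg, sq_nonneg, ht.le, div_nonneg])
    _ ≤ (2 / y * u ^ 2 + 1) / y := by
        have ht_inv : t⁻¹ ≤ 2 / y := by
          rw [inv_le_iff_one_le_mul₀ ht, div_mul_eq_mul_div, le_div_iff₀ hy]
          linarith
        rw [div_eq_mul_inv (u ^ 2), mul_comm (2 / y)]
        gcongr

lemma integral_comp_mul_gaussianReal {c : ℝ} (hc : c ≠ 0) (f : ℝ → ℝ) :
    ∫ z, f (c * z) ∂gaussianReal 0 1 = ∫ u, gaussianPDFReal 0 (c ^ 2).toNNReal u * f u := by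
  have h : ∫ u, f u ∂(gaussianReal 0 1).map (c * ·) = ∫ z, f (c * z) ∂gaussianReal 0 1 :=
    (Homeomorph.mulLeft₀ c hc).measurableEmbedding.integral_map f
  rw [← h]
  have hv : NNReal.mk (c ^ 2) (sq_nonneg c) * 1 = (c ^ 2).toNNReal := by
    ext; simp [sq_nonneg]
  have hv0 : (c ^ 2).toNNReal ≠ 0 := by simpa using hc
  rw [gaussianReal_map_const_mul, mul_zero, hv, integral_gaussianReal_eq_integral_smul hv0]
  rfl

theorem hasDerivAt_integral_gaussianPDFReal_mul {F : ℝ → ℝ} (hF : AEStronglyMeasurable F)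
    {P : ℝ[X]} (hFP : ∀ u, |F u| ≤ P.eval |u|) {y : ℝ} (hy : 0 < y) :
    HasDerivAt (fun t : ℝ => ∫ u, gaussianPDFReal 0 t.toNNReal u * F u)
      (∫ u, gaussianPDFReal 0 y.toNNReal u * ((u ^ 2 / y - 1) / (2 * y)) * F u) y := by
  set b := (3 * y)⁻¹
  have hb : 0 < b := by positivity
  have hmeas : ∀ t : ℝ, AEStronglyMeasurable fun u => gaussianPDFReal 0 t.toNNReal u * F u :=
    fun t => (measurable_gaussianPDFReal 0 _).aestronglyMeasurable.mul hF
  have hint : Integrable fun u => gaussianPDFReal 0 y.toNNReal u * F u := by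
    refine ((integrable_eval_abs_mul_exp_neg_mul_sq hb P).const_mul (√(π * y))⁻¹).mono'
      (hmeas y) (ae_of_all _ fun u => ?_)
    rw [norm_mul, norm_of_nonneg (gaussianPDFReal_nonneg _ _ _), ← mul_assoc, mul_right_comm]
    exact mul_le_mul (gaussianPDFReal_toNNReal_le (by linarith) (by linarith) u) (hFP u)
      (norm_nonneg _) (by positivity)
  have hbound : ∀ t ∈ Set.Ioo (y / 2) (3 * y / 2), ∀ u,
      ‖gaussianPDFReal 0 t.toNNReal u * ((u ^ 2 / t - 1) / (2 * t)) * F u‖ ≤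
        (√(π * y))⁻¹ / y * (((C (2 / y) * X ^ 2 + 1) * P).eval |u| * exp (-b * u ^ 2)) := by
    rintro t ⟨ht₁, ht₂⟩ u
    rw [norm_mul, norm_mul, norm_of_nonneg (gaussianPDFReal_nonneg _ _ _), Real.norm_eq_abs,
      Real.norm_eq_abs]
    calc _ ≤ (√(π * y))⁻¹ * exp (-b * u ^ 2) * ((2 / y * u ^ 2 + 1) / y) * P.eval |u| := by
          gcongr
          · exact gaussianPDFReal_toNNReal_le (by linarith) (by linarith) u
          · exact abs_sq_div_sub_one_div_le hy (by linarith) u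
          · exact hFP u
      _ = _ := by simp only [eval_mul, eval_add, eval_C, eval_pow, eval_X, eval_one, sq_abs]; ring
  refine (hasDerivAt_integral_of_dominated_loc_of_deriv_le
    (Ioo_mem_nhds (by linarith) (by linarith)) (Eventually.of_forall hmeas) hint ?_
    (ae_of_all _ fun u t ht => hbound t ht u)
    ((integrable_eval_abs_mul_exp_neg_mul_sq hb _).const_mul _)
    (ae_of_all _ fun u t ht => ?_)).2
  · exact ((measurable_gaussianPDFReal 0 _).mul (by fun_prop)).aestronglyMeasurable.mul hF
  · exact (hasDerivAt_gaussianPDFReal_toNNReal (by linarith [ht.1]) u).mul_const (F u)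

/-- Let `h(x) = E[h₁(xZ) h₂(xZ)]` with `Z` standard Gaussian and `h₁, h₂` locally Lipschitz
of polynomial growth.  If `g` satisfies `g(x²) = h(x)` and is differentiable on `(0,∞)`,
then for `x ≠ 0`, `g'(x²) = (1/(2x²)) E[(Z² − 1) h₁(xZ) h₂(xZ)]`. -/
theorem deriv_gaussian_expectation
    (h₁ h₂ : ℝ → ℝ) (hLip₁ : LocallyLipschitz h₁) (hLip₂ : LocallyLipschitz h₂)
    (C : ℝ) (nPow : ℕ)
    (hgrow₁ : ∀ x : ℝ, |h₁ x| ≤ C * (1 + |x| ^ nPow))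
    (hgrow₂ : ∀ x : ℝ, |h₂ x| ≤ C * (1 + |x| ^ nPow))
    (g g' : ℝ → ℝ)
    (hg : ∀ x : ℝ, g (x ^ 2) = ∫ z, h₁ (x * z) * h₂ (x * z) ∂(gaussianReal 0 1))
    (hderiv : ∀ y : ℝ, 0 < y → HasDerivAt g (g' y) y) :
    ∀ x : ℝ, x ≠ 0 →
      g' (x ^ 2) = (1 / (2 * x ^ 2)) *
        ∫ z, (z ^ 2 - 1) * (h₁ (x * z) * h₂ (x * z)) ∂(gaussianReal 0 1) := by
  intro x hx
  set F : ℝ → ℝ := fun u => h₁ u * h₂ u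
  have hF_growth (u : ℝ) : |F u| ≤ ((Polynomial.C C * (1 + X ^ nPow)) ^ 2).eval |u| := by
    show |h₁ u * h₂ u| ≤ _
    simpa [abs_mul, sq] using mul_le_mul (hgrow₁ u) (hgrow₂ u) (abs_nonneg _)
      ((abs_nonneg _).trans (hgrow₁ u))
  have hg_eq : ∀ y : ℝ, 0 < y → g y = ∫ u, gaussianPDFReal 0 y.toNNReal u * F u := by
    intro y hy
    have hsy := sq_sqrt hy.le
    rw [← hsy, hg, integral_comp_mul_gaussianReal (sqrt_ne_zero'.2 hy) F, hsy]
  have hy : 0 < x ^ 2 := by positivity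
  have hG := hasDerivAt_integral_gaussianPDFReal_mul (F := F)
    (hLip₁.continuous.mul hLip₂.continuous).aestronglyMeasurable hF_growth hy
  have hg' := (hderiv _ hy).unique <|
    hG.congr_of_eventuallyEq (eventually_gt_nhds hy |>.mono hg_eq)
  have hRHS := integral_comp_mul_gaussianReal hx fun u => ((u / x) ^ 2 - 1) * F u
  simp only [mul_div_cancel_left₀ _ hx] at hRHS
  rw [hg', hRHS, ← integral_const_mul]
  congr 1 with u
  field_simp
end

section
/- Let X be a d-dimensional random vector with i.i.d. centered entries of unit variance and finite fourth moment, and let g : ℝ → ℝ be Lipschitz on a neighborhood of 1 with |g| of polynomial growth. Then for distinct indices a ≠ c, |E[x_a x_c g(‖X‖²/d)]| ≤ E[|x_a x_c| · |g(‖X‖²/d) − g((‖X‖² − x_a² − x_c²)/d)|] ≤ C/d for a constant C depending only on g and the fourth moment, where the key step is that E[x_a x_c g((Σ_{j≠a,c} x_j²)/d)] = 0 by independence. -/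
/-! Deleting the coordinates `a` and `c` from `‖X‖²` moves the argument of `g` by
`(x_a² + x_c²)/d`, so by the Lipschitz bound it moves `g` by at most `L (x_a² + x_c²)/d`.
After the deletion, `x_a x_c` is independent of what remains of `‖X‖²` and centred, so that
term has zero correlation with `x_a x_c`. What is left is at most
`(L/d) E[|x_a x_c| (x_a² + x_c²)] ≤ (L/d) E[x_a⁴ + x_c⁴] = 2 L μ₄ / d`. -/

open MeasureTheory ProbabilityTheory Finset

lemma abs_mul_mul_sq_add_sq_le (x y : ℝ) : |x * y| * (x ^ 2 + y ^ 2) ≤ x ^ 4 + y ^ 4 := by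
  have hx : x ^ 4 = |x| ^ 4 := (Even.pow_abs ⟨2, rfl⟩ x).symm
  have hy : y ^ 4 = |y| ^ 4 := (Even.pow_abs ⟨2, rfl⟩ y).symm
  rw [abs_mul, hx, hy, ← sq_abs x, ← sq_abs y]
  -- the difference of the two sides is `(|x| - |y|)² (|x|² + |x| |y| + |y|²)`
  nlinarith [mul_nonneg (sq_nonneg (|x| - |y|))
    (by positivity : 0 ≤ |x| ^ 2 + |x| * |y| + |y| ^ 2)]

lemma abs_mul_mul_abs_sub_sub_sq_le {g : ℝ → ℝ} {L : ℝ} (hL : 0 ≤ L)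
    (hg : ∀ x y, |g x - g y| ≤ L * |x - y|) (x y s : ℝ) {d : ℝ} (hd : 0 ≤ d) :
    |x * y| * |g (s / d) - g ((s - x ^ 2 - y ^ 2) / d)| ≤ L * (x ^ 4 + y ^ 4) / d := by
  have hlip : |g (s / d) - g ((s - x ^ 2 - y ^ 2) / d)| ≤ L * (x ^ 2 + y ^ 2) / d := by
    have hdiff : s / d - (s - x ^ 2 - y ^ 2) / d = (x ^ 2 + y ^ 2) / d := by ring
    have := hg (s / d) ((s - x ^ 2 - y ^ 2) / d)
    rwa [hdiff, abs_of_nonneg (a := (x ^ 2 + y ^ 2) / d) (by positivity),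
      ← mul_div_assoc] at this
  calc |x * y| * |g (s / d) - g ((s - x ^ 2 - y ^ 2) / d)|
      ≤ |x * y| * (L * (x ^ 2 + y ^ 2) / d) := by gcongr
    _ = L * (|x * y| * (x ^ 2 + y ^ 2)) / d := by ring
    _ ≤ L * (x ^ 4 + y ^ 4) / d := by gcongr; exact abs_mul_mul_sq_add_sq_le x y

section
variable {Ω : Type*} [MeasurableSpace Ω] {P : Measure Ω}

lemma LipschitzWith.integrable_comp {E F : Type*} [NormedAddCommGroup E] [NormedAddCommGroup F]
    [IsFiniteMeasure P] {K : NNReal} {g : E → F} (hg : LipschitzWith K g) {u : Ω → E}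
    (hu : Integrable u P) : Integrable (fun ω => g (u ω)) P := by
  refine ((integrable_const ‖g 0‖).add (hu.norm.const_mul K)).mono'
    (hg.continuous.comp_aestronglyMeasurable hu.1) (ae_of_all _ fun ω => ?_)
  have := hg.norm_sub_le (u ω) 0
  rw [sub_zero] at this
  simp only [Pi.add_apply]
  linarith [norm_le_insert' (g (u ω)) (g 0)]

lemma integrable_pow_of_integrable_pow_two_mul [IsFiniteMeasure P] {f : Ω → ℝ}
    (hf : AEStronglyMeasurable f P) {m n : ℕ} (hmn : m ≤ 2 * n)
    (h : Integrable (fun ω => f ω ^ (2 * n)) P) : Integrable (fun ω => f ω ^ m) P := by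
  have habs : Integrable (fun ω => ‖f ω‖ ^ (2 * n)) P := by
    simpa only [Real.norm_eq_abs, Even.pow_abs ⟨n, two_mul n⟩] using h
  exact (integrable_norm_pow_of_le hf hmn habs).mono' (hf.pow m)
    (ae_of_all _ fun ω => (norm_pow (f ω) m).le)

lemma abs_integral_mul_le_integral_abs_mul_abs_sub {f h h' : Ω → ℝ}
    (hint : Integrable (fun ω => f ω * (h ω - h' ω)) P)
    (hint' : Integrable (fun ω => f ω * h' ω) P) (hzero : ∫ ω, f ω * h' ω ∂P = 0) :
    |∫ ω, f ω * h ω ∂P| ≤ ∫ ω, |f ω| * |h ω - h' ω| ∂P := by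
  have hsplit : ∫ ω, f ω * h ω ∂P = ∫ ω, f ω * (h ω - h' ω) ∂P := by
    rw [← add_zero (∫ ω, f ω * (h ω - h' ω) ∂P), ← hzero, ← integral_add hint hint']
    congr 1 with ω
    ring
  rw [hsplit]
  simpa only [abs_mul] using abs_integral_le_integral_abs (f := fun ω => f ω * (h ω - h' ω))

lemma integrable_mul_mul_sub_of_abs_sub_le [IsFiniteMeasure P] {g : ℝ → ℝ} {L : ℝ}
    (hL : 0 ≤ L) (hg : ∀ x y, |g x - g y| ≤ L * |x - y|) {x y s : Ω → ℝ} {d : ℝ}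
    (hd : 0 ≤ d) (hx : Integrable (fun ω => x ω ^ 4) P) (hy : Integrable (fun ω => y ω ^ 4) P)
    (hmeas : AEStronglyMeasurable
      (fun ω => x ω * y ω * (g (s ω / d) - g ((s ω - x ω ^ 2 - y ω ^ 2) / d))) P) :
    Integrable
      (fun ω => x ω * y ω * (g (s ω / d) - g ((s ω - x ω ^ 2 - y ω ^ 2) / d))) P := by
  refine (((hx.add hy).const_mul L).div_const d).mono' hmeas (ae_of_all _ fun ω => ?_)
  simpa only [Pi.add_apply, norm_mul, Real.norm_eq_abs, abs_mul] using
    abs_mul_mul_abs_sub_sub_sq_le hL hg (x ω) (y ω) (s ω) hd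

lemma integral_abs_mul_mul_abs_sub_le_of_abs_sub_le {g : ℝ → ℝ} {L : ℝ} (hL : 0 ≤ L)
    (hg : ∀ x y, |g x - g y| ≤ L * |x - y|) {x y s : Ω → ℝ} {d : ℝ} (hd : 0 ≤ d)
    (hx : Integrable (fun ω => x ω ^ 4) P) (hy : Integrable (fun ω => y ω ^ 4) P) :
    ∫ ω, |x ω * y ω| * |g (s ω / d) - g ((s ω - x ω ^ 2 - y ω ^ 2) / d)| ∂P
      ≤ L * (∫ ω, x ω ^ 4 ∂P + ∫ ω, y ω ^ 4 ∂P) / d := by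
  rw [← integral_add hx hy, ← integral_const_mul, ← integral_div]
  exact integral_mono_of_nonneg (ae_of_all _ fun ω => by positivity)
    (((hx.add hy).const_mul L).div_const d)
    (ae_of_all _ fun ω => abs_mul_mul_abs_sub_sub_sq_le hL hg (x ω) (y ω) (s ω) hd)

lemma ProbabilityTheory.iIndepFun.indepFun_mul_sum_sq {ι : Type*} [DecidableEq ι]
    {X : ι → Ω → ℝ} (hX : iIndepFun X P) (hmeas : ∀ i, Measurable (X i)) {a c : ι}
    {T : Finset ι} (ha : a ∉ T) (hc : c ∉ T) :
    IndepFun (fun ω => X a ω * X c ω) (fun ω => ∑ j ∈ T, X j ω ^ 2) P := by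
  have hdisj : Disjoint ({a, c} : Finset ι) T := by simp [ha, hc]
  have hpair : Measurable fun v : ({a, c} : Finset ι) → ℝ =>
      v ⟨a, by simp⟩ * v ⟨c, by simp⟩ := by
    fun_prop
  have hsum : Measurable fun v : T → ℝ => ∑ j, v j ^ 2 := by fun_prop
  convert (hX.indepFun_finset _ _ hdisj hmeas).comp hpair hsum using 1
  · rfl
  · exact funext fun ω => (Finset.sum_coe_sort T fun j => X j ω ^ 2).symm

end

theorem decorrelation_bound_general {Ω : Type*} [MeasurableSpace Ω]
    (P : Measure Ω) [IsProbabilityMeasure P]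
    (d : ℕ) (X : Fin d → Ω → ℝ)
    (hmeas : ∀ i, Measurable (X i))
    (hindep : iIndepFun X P)
    (hmean : ∀ i, ∫ ω, X i ω ∂P = 0)
    (μ₄ : ℝ) (hμ₄ : ∀ i, ∫ ω, (X i ω) ^ 4 ∂P = μ₄)
    (hμ₄int : ∀ i, Integrable (fun ω => (X i ω) ^ 4) P)
    (L : ℝ) (hL : 0 < L) (g : ℝ → ℝ)
    (hg : ∀ x y : ℝ, |g x - g y| ≤ L * |x - y|)
    (a c : Fin d) (hac : a ≠ c) :
    |∫ ω, X a ω * X c ω * g ((∑ j, (X j ω) ^ 2) / d) ∂P|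
        ≤ ∫ ω, |X a ω * X c ω| *
            |g ((∑ j, (X j ω) ^ 2) / d)
              - g (((∑ j, (X j ω) ^ 2) - (X a ω) ^ 2 - (X c ω) ^ 2) / d)| ∂P
    ∧ (∫ ω, |X a ω * X c ω| *
            |g ((∑ j, (X j ω) ^ 2) / d)
              - g (((∑ j, (X j ω) ^ 2) - (X a ω) ^ 2 - (X c ω) ^ 2) / d)| ∂P)
        ≤ (2 * L * μ₄) / d
    ∧ (∫ ω, X a ω * X c ω *
          g ((∑ j ∈ Finset.univ \ {a, c}, (X j ω) ^ 2) / d) ∂P) = 0 := by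
  have hglip : LipschitzWith ⟨L, hL.le⟩ g := .of_dist_le_mul hg
  have hgc : Continuous g := hglip.continuous
  have hXint i : Integrable (X i) P := by
    simpa using integrable_pow_of_integrable_pow_two_mul (hmeas i).aestronglyMeasurable
      (by norm_num : 1 ≤ 2 * 2) (hμ₄int i)
  have hXsq i : Integrable (fun ω => X i ω ^ 2) P :=
    integrable_pow_of_integrable_pow_two_mul (hmeas i).aestronglyMeasurable
      (by norm_num : 2 ≤ 2 * 2) (hμ₄int i)
  have hrest ω :
      ∑ j, X j ω ^ 2 - X a ω ^ 2 - X c ω ^ 2 = ∑ j ∈ univ \ {a, c}, X j ω ^ 2 := by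
    rw [sum_sdiff_eq_sub (subset_univ _), sum_pair hac, sub_sub]
  have hind : IndepFun (fun ω => X a ω * X c ω)
      (fun ω => g ((∑ j ∈ univ \ {a, c}, X j ω ^ 2) / d)) P :=
    (hindep.indepFun_mul_sum_sq hmeas (by simp) (by simp)).comp measurable_id
      (hgc.measurable.comp (measurable_id.div_const _))
  have hzero :
      ∫ ω, X a ω * X c ω * g ((∑ j ∈ univ \ {a, c}, X j ω ^ 2) / d) ∂P = 0 := by
    rw [hind.integral_fun_mul_eq_mul_integral (by fun_prop) (by fun_prop),
      (hindep.indepFun hac).integral_fun_mul_eq_mul_integral (by fun_prop) (by fun_prop),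
      hmean a, zero_mul, zero_mul]
  refine ⟨abs_integral_mul_le_integral_abs_mul_abs_sub ?_ ?_
    (by simpa only [hrest] using hzero), ?_, hzero⟩
  · exact integrable_mul_mul_sub_of_abs_sub_le hL.le hg (Nat.cast_nonneg d) (hμ₄int a)
      (hμ₄int c) (by simp only [hrest]; fun_prop)
  · simpa only [hrest, Pi.mul_def] using hind.integrable_mul
      ((hindep.indepFun hac).integrable_mul (hXint a) (hXint c))
      (hglip.integrable_comp ((integrable_finsetSum _ fun j _ => hXsq j).div_const _))
  · refine (integral_abs_mul_mul_abs_sub_le_of_abs_sub_le hL.le hg (Nat.cast_nonneg d)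
      (hμ₄int a) (hμ₄int c)).trans_eq ?_
    rw [hμ₄, hμ₄]
    ring

/-- Let `X = (x₁, …, x_d)` have i.i.d. centered entries with unit variance and fourth
moment `μ₄`, and let `g` be Lipschitz with constant `L`.  Then for `a ≠ c`,
`|E[x_a x_c g(‖X‖²/d)]| ≤ E[|x_a x_c| |g(‖X‖²/d) − g((‖X‖² − x_a² − x_c²)/d)|] ≤ C/d`
with `C = 2 L μ₄`, the key step being `E[x_a x_c g((Σ_{j≠a,c} x_j²)/d)] = 0`. -/
theorem decorrelation_bound {Ω : Type*} [MeasurableSpace Ω]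
    (P : Measure Ω) [IsProbabilityMeasure P]
    (d : ℕ) (hd : 0 < d) (X : Fin d → Ω → ℝ)
    (hmeas : ∀ i, Measurable (X i))
    (hindep : iIndepFun X P)
    (hident : ∀ i j, IdentDistrib (X i) (X j) P P)
    (hmean : ∀ i, ∫ ω, X i ω ∂P = 0)
    (hvar : ∀ i, ∫ ω, (X i ω) ^ 2 ∂P = 1)
    (μ₄ : ℝ) (hμ₄ : ∀ i, ∫ ω, (X i ω) ^ 4 ∂P = μ₄)
    (hμ₄int : ∀ i, Integrable (fun ω => (X i ω) ^ 4) P)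
    (L : ℝ) (hL : 0 < L) (g : ℝ → ℝ)
    (hg : ∀ x y : ℝ, |g x - g y| ≤ L * |x - y|)
    (a c : Fin d) (hac : a ≠ c) :
    |∫ ω, X a ω * X c ω * g ((∑ j, (X j ω) ^ 2) / d) ∂P|
        ≤ ∫ ω, |X a ω * X c ω| *
            |g ((∑ j, (X j ω) ^ 2) / d)
              - g (((∑ j, (X j ω) ^ 2) - (X a ω) ^ 2 - (X c ω) ^ 2) / d)| ∂P
    ∧ (∫ ω, |X a ω * X c ω| *
            |g ((∑ j, (X j ω) ^ 2) / d)
              - g (((∑ j, (X j ω) ^ 2) - (X a ω) ^ 2 - (X c ω) ^ 2) / d)| ∂P)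
        ≤ (2 * L * μ₄) / d
    ∧ (∫ ω, X a ω * X c ω *
          g ((∑ j ∈ Finset.univ \ {a, c}, (X j ω) ^ 2) / d) ∂P) = 0 :=
  decorrelation_bound_general P d X hmeas hindep hmean μ₄ hμ₄ hμ₄int L hL g hg a c hac
end
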